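/- Let L > 0, κ₁ ≠ 0, κ₂ ≠ 0, and set ν_n = |κ₁|·(nπ/L)² for n ≥ 1. Let A₀ ≥ 0, φ₀, t̄, C₀, C₁ ∈ ℝ and real sequences (B_n)_{n≥1}, (ψ_n)_{n≥1} with Σ_{n≥1} B_n²ν_n² < ∞. Assume: (a) A₀·cos(|κ₂|t̄ + φ₀) = C₀ + C₁t̄ and (A₀·cos(|κ₂|t̄ + φ₀))² = L (continuity at the transition time t̄, where the zero mode reaches the threshold value √L); (b) −A₀·|κ₂|·sin(|κ₂|t̄ + φ₀) = C₁ (C¹ matching of time derivatives at t̄); (c) energy conservation: (L/2)·κ₂² + ½·C₁² + ½·Σ_{n≥1} B_n²ν_n² = ½·A₀²·κ₂². Then B_n = 0 for every n ≥ 1; consequently the detached-regime solution u(t,x) = (C₀ + C₁(t−t̄))·L^{−1/2} + Σ_{n≥1} B_n·cos(ν_n(t−t̄) + ψ_n)·u_n(x) is constant in x for every t ≥ t̄. -/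
import Mathlib


open Real

/-- main theorem: with `ν_n = |κ₁|(nπ/L)²`, if at the transition time
`tbar` the zero mode matches continuously, (a) `A₀cos(|κ₂|tbar+φ₀) = C₀ + C₁tbar` with
`(A₀cos(|κ₂|tbar+φ₀))² = L`, (b) with `C¹` regularity `−A₀|κ₂|sin(|κ₂|tbar+φ₀) = C₁`, and
(c) the energy is conserved, `(L/2)κ₂² + ½C₁² + ½Σ_{n≥1}B_n²ν_n² = ½A₀²κ₂²`, then
`B_n = 0` for all `n ≥ 1`, and consequently the detached-regime solution
`u(t,x) = (C₀+C₁(t−tbar))L^{−1/2} + Σ_{n≥1}B_n cos(ν_n(t−tbar)+ψ_n)·√(2/L)cos(nπx/L)`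
is constant in `x` for every `t ≥ tbar`. -/
theorem detached_solution_is_constant (L κ₁ κ₂ : ℝ) (hL : 0 < L) (hκ₁ : κ₁ ≠ 0)
    (hκ₂ : κ₂ ≠ 0)
    (ν : ℕ → ℝ) (hν : ∀ n : ℕ, 1 ≤ n → ν n = |κ₁| * ((n : ℝ) * π / L) ^ 2)
    (A₀ φ₀ tbar C₀ C₁ : ℝ) (hA₀ : 0 ≤ A₀) (B ψ : ℕ → ℝ)
    (hsum : Summable fun n : ℕ => B (n + 1) ^ 2 * ν (n + 1) ^ 2)
    (ha1 : A₀ * Real.cos (|κ₂| * tbar + φ₀) = C₀ + C₁ * tbar)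
    (ha2 : (A₀ * Real.cos (|κ₂| * tbar + φ₀)) ^ 2 = L)
    (hb : -(A₀ * |κ₂| * Real.sin (|κ₂| * tbar + φ₀)) = C₁)
    (hc : (L / 2) * κ₂ ^ 2 + (1 / 2) * C₁ ^ 2 +
        (1 / 2) * ∑' n : ℕ, B (n + 1) ^ 2 * ν (n + 1) ^ 2
      = (1 / 2) * A₀ ^ 2 * κ₂ ^ 2) :
    (∀ n : ℕ, 1 ≤ n → B n = 0) ∧
    ∀ t : ℝ, tbar ≤ t → ∀ x ∈ Set.Icc (0 : ℝ) L, ∀ y ∈ Set.Icc (0 : ℝ) L,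
      (C₀ + C₁ * (t - tbar)) * (Real.sqrt L)⁻¹ +
          ∑' n : ℕ, B (n + 1) * Real.cos (ν (n + 1) * (t - tbar) + ψ (n + 1)) *
            (Real.sqrt (2 / L) * Real.cos (((n : ℝ) + 1) * π * x / L))
        = (C₀ + C₁ * (t - tbar)) * (Real.sqrt L)⁻¹ +
            ∑' n : ℕ, B (n + 1) * Real.cos (ν (n + 1) * (t - tbar) + ψ (n + 1)) *
              (Real.sqrt (2 / L) * Real.cos (((n : ℝ) + 1) * π * y / L)) := by

  set c := Real.cos (|κ₂| * tbar + φ₀) with hcdef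
  set s := Real.sin (|κ₂| * tbar + φ₀) with hsdef
  have hcs : s ^ 2 + c ^ 2 = 1 := Real.sin_sq_add_cos_sq _
  have hC1 : C₁ ^ 2 = A₀ ^ 2 * κ₂ ^ 2 * s ^ 2 := by
    linear_combination A₀ ^ 2 * s ^ 2 * sq_abs κ₂ - (C₁ + A₀ * |κ₂| * s) * hb + 2 * A₀ * s * |κ₂| * hb
  have hS : (∑' n : ℕ, B (n + 1) ^ 2 * ν (n + 1) ^ 2) = 0 := by
    have hL' : L = A₀ ^ 2 * c ^ 2 := by rw [← ha2]; ring
    linear_combination 2 * hc - hC1 - κ₂ ^ 2 * hL' - A₀ ^ 2 * κ₂ ^ 2 * hcs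
  have hnn : ∀ m : ℕ, 0 ≤ B (m + 1) ^ 2 * ν (m + 1) ^ 2 :=
    fun m => mul_nonneg (sq_nonneg _) (sq_nonneg _)
  have hterm : ∀ n : ℕ, B (n + 1) ^ 2 * ν (n + 1) ^ 2 = 0 := by
    intro n
    have hle := Summable.le_tsum hsum n (fun m _ => hnn m)
    exact le_antisymm (hS ▸ hle) (hnn n)
  have hB : ∀ n : ℕ, 1 ≤ n → B n = 0 := by
    intro n hn
    obtain ⟨m, rfl⟩ := Nat.exists_eq_add_of_le hn
    have h := hterm m
    rw [Nat.add_comm 1 m] at hn ⊢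
    have hνne : ν (m + 1) ≠ 0 := by
      rw [hν (m + 1) (Nat.le_add_left 1 m)]
      have h1 : (0:ℝ) < |κ₁| := abs_pos.mpr hκ₁
      have h2 : (0:ℝ) < ((m + 1 : ℕ) : ℝ) * π / L := by
        have := Real.pi_pos
        positivity
      positivity
    have hB2 : B (m + 1) ^ 2 = 0 := by
      rcases mul_eq_zero.mp h with h' | h'
      · exact h'
      · exact absurd (pow_eq_zero_iff (n := 2) (by norm_num) |>.mp h') hνne
    exact pow_eq_zero_iff (n := 2) (by norm_num) |>.mp hB2
  refine ⟨hB, fun t ht x hx y hy => ?_⟩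
  have hz : ∀ (z : ℝ),
      (∑' n : ℕ, B (n + 1) * Real.cos (ν (n + 1) * (t - tbar) + ψ (n + 1)) *
        (Real.sqrt (2 / L) * Real.cos (((n : ℝ) + 1) * π * z / L))) = 0 := by
    intro z
    have : ∀ n : ℕ, B (n + 1) * Real.cos (ν (n + 1) * (t - tbar) + ψ (n + 1)) *
        (Real.sqrt (2 / L) * Real.cos (((n : ℝ) + 1) * π * z / L)) = 0 := by
      intro n
      rw [hB (n + 1) (Nat.le_add_left 1 n)]
      ring
    exact (tsum_congr this).trans tsum_zero
  rw [hz x, hz y]
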